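/- arXiv:1406.2714 — 2 statements merged into one kernel-verified Lean document; each statement's English description precedes it below -/
import Mathlib

section
/- For every even n > 2, the 3-uniform hypergraph M on vertex set {v_{ij} : 1 ≤ i ≤ n/2, j ∈ {1,2}} with edge set {{v_{ij}, v_{k1}, v_{k2}} : k < i} is an edge-maximal hypertree and has exactly n(n−2)/4 = (1/2)·C(n,2) − n/4 edges. -/
variable {V : Type*} [DecidableEq V]

/-- The list of consecutive `k`-windows (as finsets) of a vertex sequence. -/
def windows (k : ℕ) (w : List V) : List (Finset V) :=
  (List.range (w.length + 1 - k)).map fun i => ((w.drop i).take k).toFinset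

/-- `w` is the vertex sequence of a chain: `v₁ ≠ v_l`, each window is a `k`-set,
and the `l - k + 1` window edges are pairwise distinct. -/
def IsChainSeq (k : ℕ) (w : List V) : Prop :=
  k ≤ w.length ∧ w.head? ≠ w.getLast? ∧
  (∀ e ∈ windows k w, e.card = k) ∧ (windows k w).Nodup

/-- `w` is the vertex sequence of a semicycle: `v₁ = v_l`, each window is a `k`-set,
and the `l - k + 1` window edges are pairwise distinct. -/
def IsSemicycleSeq (k : ℕ) (w : List V) : Prop :=
  k ≤ w.length ∧ w.head? = w.getLast? ∧
  (∀ e ∈ windows k w, e.card = k) ∧ (windows k w).Nodup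

/-- A hypergraph with edge set `E` contains no semicycle as a subhypergraph. -/
def SemicycleFree (k : ℕ) (E : Finset (Finset V)) : Prop :=
  ¬ ∃ w : List V, IsSemicycleSeq k w ∧ ∀ e ∈ windows k w, e ∈ E

/-- Every two distinct vertices of `S` lie in a common chain subhypergraph of `E`. -/
def ChainConnOn (k : ℕ) (S : Finset V) (E : Finset (Finset V)) : Prop :=
  ∀ u ∈ S, ∀ v ∈ S, u ≠ v →
    ∃ w : List V, IsChainSeq k w ∧ (∀ e ∈ windows k w, e ∈ E) ∧ u ∈ w ∧ v ∈ w

/-- Chain-connectedness on the whole (finite) vertex type. -/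
def ChainConn [Fintype V] (k : ℕ) (E : Finset (Finset V)) : Prop :=
  ChainConnOn k Finset.univ E

/-- A `k`-uniform hypertree: chain-connected and semicycle-free. -/
def IsHypertree [Fintype V] (k : ℕ) (E : Finset (Finset V)) : Prop :=
  (∀ e ∈ E, e.card = k) ∧ ChainConn k E ∧ SemicycleFree k E

/-- Every chain subhypergraph of `E` has length (number of edges) at most `l`. -/
def ChainsLenLE (k l : ℕ) (E : Finset (Finset V)) : Prop :=
  ∀ w : List V, IsChainSeq k w → (∀ e ∈ windows k w, e ∈ E) →
    w.length + 1 - k ≤ l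

/-- An `l`-hypertree: a hypertree all of whose chains have length at most `l`. -/
def IsLHypertree [Fintype V] (k l : ℕ) (E : Finset (Finset V)) : Prop :=
  IsHypertree k E ∧ ChainsLenLE k l E

/-- Edge-minimal: deleting any edge destroys chain-connectedness. -/
def EdgeMinimal [Fintype V] (k : ℕ) (E : Finset (Finset V)) : Prop :=
  ∀ e ∈ E, ¬ ChainConn k (E.erase e)

/-- Edge-maximal: adding any new `k`-set as an edge creates a semicycle. -/
def EdgeMaximal [Fintype V] (k : ℕ) (E : Finset (Finset V)) : Prop :=
  ∀ s : Finset V, s.card = k → s ∉ E → ¬ SemicycleFree k (insert s E)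

/-- `S` is a (tight) star subhypergraph of `E`: a nonempty set of edges of `E`
all containing a common `(k-1)`-set kernel. -/
def IsStarSub (k : ℕ) (E S : Finset (Finset V)) : Prop :=
  S ⊆ E ∧ S.Nonempty ∧ ∃ K : Finset V, K.card = k - 1 ∧ ∀ e ∈ S, K ⊆ e

/-- `S` is a maximal star subhypergraph of `E`. -/
def IsMaxStar (k : ℕ) (E S : Finset (Finset V)) : Prop :=
  IsStarSub k E S ∧ ∀ T, IsStarSub k E T → S ⊆ T → S = T

/-!
Write `m = n / 2` and view the vertices as a ladder with rungs `{(k, 0), (k, 1)}`: every edge is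
a rung together with one vertex of a higher rung. Two distinct edges meeting in two vertices meet
exactly in a rung, so three consecutive distinct edges of a vertex sequence would put three
distinct vertices on one rung; since a semicycle of a 3-graph has at least five vertices, there is
no semicycle. Any two vertices lie on one edge, or on two edges sharing a rung. If a 3-set is not
an edge, its vertex `x` of lowest rung lies strictly below the other two, `y` and `z`, and with `x'`
the other vertex on the rung of `x` the sequence `y z x x' y` is a semicycle. Edges correspond to
pairs (vertex, lower rung), so there are `∑ 2i = m (m - 1)` of them.
-/

open Finset

theorem windows_cons {k : ℕ} (a : V) {l : List V} (h : k ≤ l.length + 1) :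
    windows k (a :: l) = ((a :: l).take k).toFinset :: windows k l := by
  rw [windows, List.length_cons, show l.length + 1 + 1 - k = (l.length + 1 - k) + 1 by omega,
    List.range_succ_eq_map]
  simp [windows, Function.comp_def]

@[simp]
theorem windows_three_cons (a b c : V) (l : List V) :
    windows 3 (a :: b :: c :: l) = {a, b, c} :: windows 3 (b :: c :: l) := by
  rw [windows_cons a (by simp)]
  simp

@[simp]
theorem windows_three_pair (a b : V) : windows 3 [a, b] = [] := rfl

theorem ne_of_card_eq_three {a b c : V} (h : #{a, b, c} = 3) : a ≠ b ∧ a ≠ c ∧ b ≠ c := by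
  refine ⟨?_, ?_, ?_⟩ <;> rintro rfl <;> grind [card_le_two, insert_idem, pair_comm]

theorem triple_rotate (a b c : V) : ({a, b, c} : Finset V) = {b, c, a} := by
  ext
  simp only [mem_insert, mem_singleton]
  tauto

theorem IsSemicycleSeq.five_le_length {w : List V} (h : IsSemicycleSeq 3 w) : 5 ≤ w.length := by
  obtain ⟨hlen, hcyc, hcard, hnodup⟩ := h
  match w with
  | [] | [_] | [_, _] => simp at hlen
  | [a, b, c] =>
    obtain rfl : a = c := by simpa using hcyc
    exact ((ne_of_card_eq_three (hcard {a, b, a} (by simp))).2.1 rfl).elim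
  | [a, b, c, d] =>
    obtain rfl : a = d := by simpa using hcyc
    simp [triple_rotate a b c] at hnodup
  | _ :: _ :: _ :: _ :: _ :: _ => simp

theorem isChainSeq_triple {a b c : V} (hac : a ≠ c) (h : #{a, b, c} = 3) :
    IsChainSeq 3 [a, b, c] := by
  simp [IsChainSeq, hac, h]

theorem isChainSeq_quad {a b c d : V} (had : a ≠ d) (h₁ : #{a, b, c} = 3)
    (h₂ : #{b, c, d} = 3) (h₁₂ : ({a, b, c} : Finset V) ≠ {b, c, d}) :
    IsChainSeq 3 [a, b, c, d] := by
  simp [IsChainSeq, had, h₁, h₂, h₁₂]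

section Rung

variable {α : Type*}

def partner (x : α × Fin 2) : α × Fin 2 := (x.1, x.2.rev)

@[simp]
theorem partner_fst (x : α × Fin 2) : (partner x).1 = x.1 := rfl

theorem partner_ne_self (x : α × Fin 2) : partner x ≠ x := by
  obtain ⟨a, j⟩ := x
  fin_cases j <;> simp [partner]

theorem eq_partner_of_fst_eq {x y : α × Fin 2} (hne : x ≠ y) (h : x.1 = y.1) :
    y = partner x := by
  obtain ⟨a, i⟩ := x
  obtain ⟨b, j⟩ := y
  simp only at h
  subst h
  fin_cases i <;> fin_cases j <;> simp_all [partner]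

variable [DecidableEq α]

def rung (k : α) : Finset (α × Fin 2) := {(k, 0), (k, 1)}

@[simp]
theorem mem_rung {k : α} {y : α × Fin 2} : y ∈ rung k ↔ y.1 = k := by
  obtain ⟨a, j⟩ := y
  fin_cases j <;> simp [rung]

theorem card_rung (k : α) : #(rung k) = 2 := by
  simp [rung]

theorem pair_partner (x : α × Fin 2) : {x, partner x} = rung x.1 := by
  ext y
  simp only [mem_insert, mem_singleton, mem_rung]
  constructor
  · rintro (rfl | rfl) <;> rfl
  · intro h
    by_cases hy : x = y
    · exact .inl hy.symm
    · exact .inr (eq_partner_of_fst_eq hy h.symm)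

end Rung

/-- The paper's `M` on `n = 2m` vertices, with `v_{ij}` encoded as `(i - 1, j - 1)`. -/
def ladder (m : ℕ) : Finset (Finset (Fin m × Fin 2)) :=
  ((univ : Finset (Fin m × Fin 2)).sigma fun x => Iio x.1).image fun p => insert p.1 (rung p.2)

section Ladder

variable {m : ℕ}

theorem mem_ladder {e : Finset (Fin m × Fin 2)} :
    e ∈ ladder m ↔ ∃ x k, k < x.1 ∧ e = insert x (rung k) := by
  simp [ladder, eq_comm]

theorem insert_rung_mem_ladder {x : Fin m × Fin 2} {k : Fin m} (h : k < x.1) :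
    insert x (rung k) ∈ ladder m :=
  mem_ladder.2 ⟨x, k, h, rfl⟩

theorem card_of_mem_ladder {e : Finset (Fin m × Fin 2)} (he : e ∈ ladder m) : #e = 3 := by
  obtain ⟨x, k, hk, rfl⟩ := mem_ladder.1 he
  rw [card_insert_of_notMem (by simpa using hk.ne'), card_rung]

theorem insert_rung_inj {x y : Fin m × Fin 2} {k l : Fin m} (hk : k < x.1) (hl : l < y.1) :
    insert x (rung k) = insert y (rung l) ↔ x = y ∧ k = l := by
  refine ⟨fun hxy => ?_, fun ⟨hxy, hkl⟩ => hxy ▸ hkl ▸ rfl⟩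
  have hy : y ∈ insert x (rung k) := hxy ▸ mem_insert_self y _
  have hx : x ∈ insert y (rung l) := hxy ▸ mem_insert_self x _
  simp only [mem_insert, mem_rung] at hx hy
  obtain rfl : x = y := by
    rcases hx with hx | hx
    · exact hx
    · rcases hy with hy | hy
      · exact hy.symm
      · order
  have hk' : ((k, 0) : Fin m × Fin 2) ∈ insert x (rung l) := hxy ▸ by simp [rung]
  simp only [mem_insert, mem_rung] at hk'
  rcases hk' with h | h
  · exact absurd (congrArg Prod.fst h) hk.ne
  · exact ⟨rfl, h⟩

theorem card_ladder : #(ladder m) = m * (m - 1) := by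
  rw [ladder, card_image_of_injOn, card_sigma]
  · simp only [Fin.card_Iio, Fintype.sum_prod_type, sum_const, card_univ, Fintype.card_fin,
      smul_eq_mul]
    rw [← mul_sum, mul_comm, Fin.sum_univ_eq_sum_range (fun i => i), sum_range_id_mul_two]
  · rintro ⟨x, k⟩ hk ⟨y, l⟩ hl hxy
    simp only [coe_sigma, Set.mem_sigma_iff, coe_univ, Set.mem_univ, coe_Iio, Set.mem_Iio,
      true_and] at hk hl hxy
    obtain ⟨rfl, rfl⟩ := (insert_rung_inj hk hl).1 hxy
    rfl

theorem eq_insert_rung_of_fst_lt {e : Finset (Fin m × Fin 2)} (he : e ∈ ladder m)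
    {x y : Fin m × Fin 2} (hx : x ∈ e) (hy : y ∈ e) (hxy : x.1 < y.1) :
    e = insert y (rung x.1) := by
  obtain ⟨z, k, hk, rfl⟩ := mem_ladder.1 he
  simp only [mem_insert, mem_rung] at hx hy
  rcases hx with rfl | rfl <;> rcases hy with rfl | hy
  · order
  · order
  · rfl
  · order

theorem fst_eq_of_mem_of_mem {e f : Finset (Fin m × Fin 2)} (he : e ∈ ladder m)
    (hf : f ∈ ladder m) (hef : e ≠ f) {x y : Fin m × Fin 2} (hxe : x ∈ e) (hye : y ∈ e)
    (hxf : x ∈ f) (hyf : y ∈ f) : x.1 = y.1 := by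
  rcases lt_trichotomy x.1 y.1 with h | h | h
  · rw [eq_insert_rung_of_fst_lt he hxe hye h, eq_insert_rung_of_fst_lt hf hxf hyf h] at hef
    exact (hef rfl).elim
  · exact h
  · rw [eq_insert_rung_of_fst_lt he hye hxe h, eq_insert_rung_of_fst_lt hf hyf hxf h] at hef
    exact (hef rfl).elim

theorem ladder_not_three_consecutive {a b c d e : Fin m × Fin 2} (h₁ : {a, b, c} ∈ ladder m)
    (h₂ : {b, c, d} ∈ ladder m) (h₃ : {c, d, e} ∈ ladder m)
    (h₁₂ : ({a, b, c} : Finset _) ≠ {b, c, d})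
    (h₂₃ : ({b, c, d} : Finset _) ≠ {c, d, e}) : False := by
  obtain ⟨hbc, hbd, hcd⟩ := ne_of_card_eq_three (card_of_mem_ladder h₂)
  have hbc₁ : b.1 = c.1 :=
    fst_eq_of_mem_of_mem h₁ h₂ h₁₂ (by simp) (by simp) (by simp) (by simp)
  have hcd₁ : c.1 = d.1 :=
    fst_eq_of_mem_of_mem h₂ h₃ h₂₃ (by simp) (by simp) (by simp) (by simp)
  have hc : c = partner b := eq_partner_of_fst_eq hbc hbc₁
  have hd : d = partner b := eq_partner_of_fst_eq hbd (hbc₁.trans hcd₁)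
  exact hcd (hc.trans hd.symm)

theorem ladder_semicycleFree : SemicycleFree 3 (ladder m) := by
  rintro ⟨w, hw, hmem⟩
  have hnodup := hw.2.2.2
  match w, hw.five_le_length with
  | a :: b :: c :: d :: e :: l, _ =>
    simp only [windows_three_cons, List.nodup_cons, List.mem_cons] at hnodup
    exact ladder_not_three_consecutive (hmem _ (by simp)) (hmem _ (by simp)) (hmem _ (by simp))
      (fun h => hnodup.1 (.inl h)) (fun h => hnodup.2.1 (.inl h))

theorem exists_chain_of_fst_lt {u v : Fin m × Fin 2} (h : u.1 < v.1) :
    ∃ w, IsChainSeq 3 w ∧ (∀ e ∈ windows 3 w, e ∈ ladder m) ∧ u ∈ w ∧ v ∈ w := by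
  have he : {v, u, partner u} ∈ ladder m := by
    rw [pair_partner]
    exact insert_rung_mem_ladder h
  refine ⟨[v, u, partner u], isChainSeq_triple ?_ (card_of_mem_ladder he), by simpa using he,
    by simp, by simp⟩
  exact fun hv => h.ne' (by rw [hv, partner_fst])

theorem exists_chain_partner {x : Fin m × Fin 2} {k : Fin m} (hk : k ≠ x.1) :
    ∃ w, IsChainSeq 3 w ∧ (∀ e ∈ windows 3 w, e ∈ ladder m) ∧
      x ∈ w ∧ partner x ∈ w := by
  rcases hk.lt_or_gt with h | h
  · have h₁ : {x, (k, 0), (k, 1)} ∈ ladder m := insert_rung_mem_ladder h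
    have h₂ : {(k, 0), (k, 1), partner x} ∈ ladder m :=
      triple_rotate (partner x) _ _ ▸ insert_rung_mem_ladder h
    refine ⟨[x, (k, 0), (k, 1), partner x], isChainSeq_quad (partner_ne_self x).symm
      (card_of_mem_ladder h₁) (card_of_mem_ladder h₂) fun he => ?_,
      by simp [h₁, h₂], by simp, by simp⟩
    have hx : x ∈ ({(k, 0), (k, 1), partner x} : Finset _) := he ▸ mem_insert_self x _
    simp only [mem_insert, mem_singleton] at hx
    rcases hx with rfl | rfl | hx
    exacts [hk rfl, hk rfl, partner_ne_self x hx.symm]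
  · have he : {(k, 0), x, partner x} ∈ ladder m := by
      rw [pair_partner]
      exact insert_rung_mem_ladder h
    refine ⟨[(k, 0), x, partner x], isChainSeq_triple ?_ (card_of_mem_ladder he),
      by simpa using he, by simp, by simp⟩
    exact fun hk' => h.ne' (congrArg Prod.fst hk')

theorem ladder_chainConn (hm : 2 ≤ m) : ChainConn 3 (ladder m) := by
  have : Nontrivial (Fin m) := Fin.nontrivial_iff_two_le.2 hm
  intro u _ v _ huv
  rcases lt_trichotomy u.1 v.1 with h | h | h
  · exact exists_chain_of_fst_lt h
  · obtain ⟨k, hk⟩ := exists_ne u.1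
    rw [eq_partner_of_fst_eq huv h]
    exact exists_chain_partner hk
  · obtain ⟨w, hw, hwM, hv, hu⟩ := exists_chain_of_fst_lt h
    exact ⟨w, hw, hwM, hu, hv⟩

theorem fst_lt_of_notMem_ladder {x y z : Fin m × Fin 2} (hxy : x ≠ y) (hyz : y ≠ z)
    (hxz : x ≠ z) (hy : x.1 ≤ y.1) (hz : x.1 ≤ z.1) (hs : {z, x, y} ∉ ladder m) :
    x.1 < y.1 := by
  refine hy.lt_of_ne fun h => hs ?_
  obtain rfl := eq_partner_of_fst_eq hxy h
  have hz' : x.1 < z.1 := hz.lt_of_ne fun h' => hyz (eq_partner_of_fst_eq hxz h').symm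
  rw [pair_partner]
  exact insert_rung_mem_ladder hz'

theorem exists_fst_lt_of_notMem_ladder {s : Finset (Fin m × Fin 2)} (hs : #s = 3)
    (hsM : s ∉ ladder m) : ∃ x y z, y ≠ z ∧ x.1 < y.1 ∧ x.1 < z.1 ∧ s = {y, z, x} := by
  obtain ⟨x, hx, hmin⟩ := s.exists_min_image Prod.fst (card_pos.1 (by omega))
  have hs₂ : #(s.erase x) = 2 := by rw [card_erase_of_mem hx, hs]
  obtain ⟨y, z, hyz, hyz'⟩ := card_eq_two.1 hs₂
  have hy : y ∈ s.erase x := by simp [hyz']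
  have hz : z ∈ s.erase x := by simp [hyz']
  rw [mem_erase] at hy hz
  rw [← insert_erase hx, hyz'] at hsM ⊢
  refine ⟨x, y, z, hyz, ?_, ?_, triple_rotate x y z⟩
  · exact fst_lt_of_notMem_ladder hy.1.symm hyz hz.1.symm (hmin y hy.2) (hmin z hz.2)
      (by rwa [triple_rotate])
  · exact fst_lt_of_notMem_ladder hz.1.symm hyz.symm hy.1.symm (hmin z hz.2) (hmin y hy.2)
      (by rwa [insert_comm])

theorem ladder_edgeMaximal : EdgeMaximal 3 (ladder m) := by
  intro s hs hsM
  obtain ⟨x, y, z, hyz, hy, hz, rfl⟩ := exists_fst_lt_of_notMem_ladder hs hsM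
  have h₁ : {z, x, partner x} = insert z (rung x.1) := pair_partner x ▸ rfl
  have h₂ : {x, partner x, y} = insert y (rung x.1) := by rw [← triple_rotate, pair_partner]
  have h₁M : {z, x, partner x} ∈ ladder m := h₁ ▸ insert_rung_mem_ladder hz
  have h₂M : {x, partner x, y} ∈ ladder m := h₂ ▸ insert_rung_mem_ladder hy
  have h₁₂ : ({z, x, partner x} : Finset _) ≠ {x, partner x, y} := by
    rw [h₁, h₂, Ne, insert_rung_inj hz hy]
    exact fun h => hyz h.1.symm
  refine fun hfree => hfree ⟨[y, z, x, partner x, y], ⟨by simp, by simp, ?_, ?_⟩, ?_⟩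
  · simp [hs, card_of_mem_ladder h₁M, card_of_mem_ladder h₂M]
  · simpa using ⟨⟨fun h => hsM (h ▸ h₁M), fun h => hsM (h ▸ h₂M)⟩, h₁₂⟩
  · simp [h₁M, h₂M]

end Ladder

/-- the 3-uniform hypergraph `M` is an edge-maximal hypertree with
exactly `n(n-2)/4` edges. -/
theorem stmt17 (n : ℕ) (hn : 2 < n) (hev : Even n)
    (E : Finset (Finset (Fin (n / 2) × Fin 2)))
    (hE : ∀ e, e ∈ E ↔ ∃ i k : Fin (n / 2), ∃ j : Fin 2,
      (k : ℕ) < (i : ℕ) ∧ e = {(i, j), (k, 0), (k, 1)}) :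
    IsHypertree 3 E ∧ EdgeMaximal 3 E ∧ E.card = n * (n - 2) / 4 := by
  obtain rfl : E = ladder (n / 2) := by
    ext e
    rw [hE, mem_ladder]
    constructor
    · rintro ⟨i, k, j, hki, rfl⟩
      exact ⟨(i, j), k, hki, rfl⟩
    · rintro ⟨⟨i, j⟩, k, hki, rfl⟩
      exact ⟨i, k, j, hki, rfl⟩
  obtain ⟨m, rfl⟩ := hev
  refine ⟨⟨fun _ => card_of_mem_ladder, ladder_chainConn (by omega), ladder_semicycleFree⟩,
    ladder_edgeMaximal, ?_⟩
  obtain ⟨t, rfl⟩ : ∃ t, m = t + 2 := ⟨m - 2, by omega⟩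
  rw [card_ladder, show (t + 2 + (t + 2)) / 2 = t + 2 by omega,
    show t + 2 + (t + 2) - 2 = 2 * (t + 1) by omega, show t + 2 - 1 = t + 1 by omega]
  symm
  apply Nat.div_eq_of_eq_mul_left (by norm_num)
  ring
end

section
/- For k > 4, there are only finitely many k-uniform isolated hypertrees (hypertrees that are simultaneously edge-minimal and edge-maximal). -/
variable {V : Type*} [DecidableEq V]

/-!
Edge-minimality attaches to every edge a pair of vertices all of whose connecting chains pass
through that edge. In a semicycle-free hypergraph a chain repeats no vertex (a repetition would
close a semicycle), so it has at most `n` edges, and an edge-minimal hypertree has at most `n³`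
edges.
Edge-maximality forces every `k`-set `s` outside `E` to close a semicycle, in which the
neighbouring edge shares `k - 1` vertices with `s`; hence every `k`-set lies in the upper shadow of
the shadow of `E`, and `C(n, k) ≤ k n |E| ≤ k n⁴`, which fails for `k ≥ 5` and `n` large.
-/

open Finset FinsetFamily
open scoped Nat

namespace List

variable {α : Type*} {l : List α}

lemma nodup_of_card_toFinset_eq_length [DecidableEq α] (h : l.toFinset.card = l.length) :
    l.Nodup := by
  rw [List.card_toFinset] at h
  exact l.dedup_sublist.eq_of_length h ▸ l.nodup_dedup

lemma head?_take_drop_eq_getLast? {a b : ℕ} (hab : a ≤ b) (hb : b < l.length) (h : l[a] = l[b]) :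
    ((l.drop a).take (b - a + 1)).head? = ((l.drop a).take (b - a + 1)).getLast? := by
  rw [List.head?_take, List.head?_drop, List.getLast?_eq_getElem?]
  simp only [List.length_take, List.length_drop, List.getElem?_take, List.getElem?_drop]
  rw [if_neg (by omega), min_eq_left (by omega), if_pos (by omega)]
  grind

end List

section Windows

variable {k : ℕ} {w : List V}

lemma length_windows (k : ℕ) (w : List V) : (windows k w).length = w.length + 1 - k := by
  simp [windows]

lemma getElem_windows {i : ℕ} (hi : i < (windows k w).length) :
    (windows k w)[i] = ((w.drop i).take k).toFinset := by
  simp [windows]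

lemma toFinset_take_drop_mem_windows {i : ℕ} (hi : i + k ≤ w.length) :
    ((w.drop i).take k).toFinset ∈ windows k w :=
  List.mem_map.2 ⟨i, List.mem_range.2 (by omega), rfl⟩

lemma windows_drop {i : ℕ} (hi : i ≤ w.length) : windows k (w.drop i) = (windows k w).drop i := by
  apply List.ext_getElem
  · simp only [length_windows, List.length_drop]; omega
  · intro j h₁ h₂
    simp [getElem_windows, List.drop_drop]

lemma windows_take (m : ℕ) : windows k (w.take m) = (windows k w).take (m + 1 - k) := by
  apply List.ext_getElem
  · simp only [length_windows, List.length_take]; omega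
  · intro j h₁ h₂
    simp only [length_windows, List.length_take] at h₁
    rw [getElem_windows, List.getElem_take, getElem_windows, List.drop_take, List.take_take,
      min_eq_left (by omega)]

lemma windows_take_drop_sublist {i : ℕ} (hi : i ≤ w.length) (m : ℕ) :
    (windows k ((w.drop i).take m)).Sublist (windows k w) := by
  rw [windows_take, windows_drop hi]
  exact (List.take_sublist _ _).trans (List.drop_sublist _ _)

lemma le_sub_of_getElem_eq (hlen : k ≤ w.length) (hcard : ∀ e ∈ windows k w, e.card = k)
    {a b : ℕ} (hab : a < b) (hb : b < w.length) (h : w[a] = w[b]) : k ≤ b - a := by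
  by_contra! hba
  -- `w[a]` and `w[b]` both lie in the window starting at `b + 1 - k`, whose entries are distinct
  have hwin : ((w.drop (b + 1 - k)).take k).length = k := by simp; omega
  have hnd : ((w.drop (b + 1 - k)).take k).Nodup := List.nodup_of_card_toFinset_eq_length <| by
    rw [hwin]; exact hcard _ (toFinset_take_drop_mem_windows (by omega))
  have := hnd.getElem_inj_iff (i := a - (b + 1 - k)) (j := b - (b + 1 - k))
    (hi := by omega) (hj := by omega)
  simp only [List.getElem_take, List.getElem_drop] at this
  grind

lemma getElem_windows_succ_subset {i : ℕ} (hi : i + 1 < (windows k w).length) :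
    (windows k w)[i + 1] ⊆
      insert (w[i + k]'(by rw [length_windows] at hi; omega)) (windows k w)[i] := by
  have hlast : (w.drop i).take (k + 1) =
      (w.drop i).take k ++ [w[i + k]'(by rw [length_windows] at hi; omega)] := by
    rw [List.take_add_one, List.getElem?_drop, List.getElem?_eq_getElem]; rfl
  have hshift : (w.drop (i + 1)).take k = ((w.drop i).take (k + 1)).drop 1 := by
    rw [List.drop_take, List.drop_drop, Nat.add_sub_cancel, Nat.add_comm]
  intro x hx
  rw [getElem_windows, hshift, List.mem_toFinset] at hx
  have := List.mem_of_mem_drop hx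
  rw [hlast] at this
  rw [getElem_windows, Finset.mem_insert, List.mem_toFinset]
  simpa [or_comm] using this

lemma exists_card_add_one_subset_getElem_windows (hk : 0 < k)
    (hcard : ∀ e ∈ windows k w, e.card = k) {i : ℕ} (hi : i + 1 < (windows k w).length) :
    ∃ K : Finset V, K ⊆ (windows k w)[i] ∧ K ⊆ (windows k w)[i + 1] ∧ #K + 1 = k := by
  have := length_windows k w
  have hmem : w[i + k] ∈ (windows k w)[i + 1] := by
    rw [getElem_windows, List.mem_toFinset, List.mem_iff_getElem]
    refine ⟨k - 1, by simp; omega, ?_⟩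
    simp only [List.getElem_take, List.getElem_drop]
    congr 1; omega
  refine ⟨((windows k w)[i + 1]).erase w[i + k], ?_, Finset.erase_subset _ _, ?_⟩
  · exact Finset.subset_insert_iff.1 (getElem_windows_succ_subset hi)
  · rw [Finset.card_erase_add_one hmem, hcard _ (List.getElem_mem hi)]

end Windows

lemma SemicycleFree.nodup {k : ℕ} {E : Finset (Finset V)} {w : List V}
    (hfree : SemicycleFree k E) (hlen : k ≤ w.length) (hcard : ∀ e ∈ windows k w, e.card = k)
    (hnd : (windows k w).Nodup) (hE : ∀ e ∈ windows k w, e ∈ E) : w.Nodup := by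
  rw [List.Nodup, List.pairwise_iff_getElem]
  intro a b ha hb hab h
  have hka := le_sub_of_getElem_eq hlen hcard hab hb h
  have hsub := windows_take_drop_sublist (k := k) (w := w) (i := a) (by omega) (b - a + 1)
  exact hfree ⟨(w.drop a).take (b - a + 1),
    ⟨by simp; omega, List.head?_take_drop_eq_getLast? hab.le hb h,
      fun e he => hcard e (hsub.subset he), hnd.sublist hsub⟩,
    fun e he => hE e (hsub.subset he)⟩

namespace Finset

variable {α : Type*} [DecidableEq α] {𝒜 : Finset (Finset α)} {r : ℕ}

lemma card_shadow_le_of_sized (h𝒜 : (𝒜 : Set (Finset α)).Sized r) : #(∂ 𝒜) ≤ #𝒜 * r := by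
  rw [shadow, sup_eq_biUnion]
  exact card_biUnion_le_card_mul _ _ _ fun s hs => card_image_le.trans (h𝒜 hs).le

lemma card_upShadow_le [Fintype α] : #(∂⁺ 𝒜) ≤ #𝒜 * Fintype.card α := by
  rw [upShadow, sup_eq_biUnion]
  exact card_biUnion_le_card_mul _ _ _ fun s _ => card_image_le.trans (card_le_univ _)

end Finset

lemma mem_upShadow_shadow_of_not_semicycleFree_insert [Fintype V] {k : ℕ}
    {E : Finset (Finset V)} {s : Finset V} (hk : 2 ≤ k) (hfree : SemicycleFree k E)
    (h : ¬ SemicycleFree k (insert s E)) : s ∈ ∂⁺ (∂ E) := by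
  obtain ⟨w, hw, hwE⟩ := not_not.1 h
  have hsw : s ∈ windows k w := by
    by_contra hsw
    exact hfree ⟨w, hw, fun e he =>
      (mem_insert.1 (hwE e he)).resolve_left fun hes => hsw (hes ▸ he)⟩
  obtain ⟨hlen, hcyc, hcard, hnd⟩ := hw
  obtain ⟨i, hi, rfl⟩ := List.mem_iff_getElem.1 hsw
  -- a semicycle has at least two edges, as its first and last vertices coincide
  have htwo : 2 ≤ (windows k w).length := by
    rw [List.head?_eq_getElem?, List.getLast?_eq_getElem?, List.getElem?_eq_getElem (by omega),
      List.getElem?_eq_getElem (by omega)] at hcyc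
    have := le_sub_of_getElem_eq hlen hcard (by omega) (by omega) (Option.some.inj hcyc)
    rw [length_windows]; omega
  obtain ⟨j, hj, hji, K, hKj, hKi, hK⟩ : ∃ j, ∃ hj : j < (windows k w).length, j ≠ i ∧
      ∃ K, K ⊆ (windows k w)[j] ∧ K ⊆ (windows k w)[i] ∧ #K + 1 = k := by
    rcases Nat.lt_or_ge (i + 1) (windows k w).length with hi' | hi'
    · obtain ⟨K, hKi, hKj, hK⟩ := exists_card_add_one_subset_getElem_windows (by omega) hcard hi'
      exact ⟨i + 1, hi', by omega, K, hKj, hKi, hK⟩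
    · obtain ⟨j, rfl⟩ : ∃ j, i = j + 1 := ⟨i - 1, by omega⟩
      obtain ⟨K, hKj, hKi, hK⟩ := exists_card_add_one_subset_getElem_windows (by omega) hcard hi
      exact ⟨j, by omega, by omega, K, hKj, hKi, hK⟩
  have hjE : (windows k w)[j] ∈ E := (mem_insert.1 (hwE _ (List.getElem_mem hj))).resolve_left
    fun h => hji (hnd.getElem_inj_iff.1 h)
  rw [mem_upShadow_iff_exists_mem_card_add_one]
  refine ⟨K, mem_shadow_iff_exists_mem_card_add_one.2 ⟨_, hjE, hKj, ?_⟩, hKi, ?_⟩ <;>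
    rw [hcard _ (List.getElem_mem _), hK]

lemma powersetCard_subset_upShadow_shadow [Fintype V] {k : ℕ} {E : Finset (Finset V)}
    (hk : 2 ≤ k) (hfree : SemicycleFree k E) (hmax : EdgeMaximal k E) :
    (univ : Finset V).powersetCard k ⊆ ∂⁺ (∂ E) := by
  intro s hs
  rw [mem_powersetCard] at hs
  by_cases hsE : s ∈ E
  · obtain ⟨a, ha⟩ := card_pos.1 (by omega : 0 < #s)
    exact mem_upShadow_iff_erase_mem.2 ⟨a, ha, erase_mem_shadow hsE ha⟩
  · exact mem_upShadow_shadow_of_not_semicycleFree_insert hk hfree (hmax s hs.2 hsE)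

lemma choose_le_card_mul_of_edgeMaximal [Fintype V] {k : ℕ} {E : Finset (Finset V)}
    (hk : 2 ≤ k) (huni : ∀ e ∈ E, #e = k) (hfree : SemicycleFree k E) (hmax : EdgeMaximal k E) :
    (Fintype.card V).choose k ≤ #E * k * Fintype.card V :=
  calc (Fintype.card V).choose k = #((univ : Finset V).powersetCard k) := by simp
    _ ≤ #(∂⁺ (∂ E)) := card_le_card (powersetCard_subset_upShadow_shadow hk hfree hmax)
    _ ≤ #(∂ E) * Fintype.card V := card_upShadow_le
    _ ≤ #E * k * Fintype.card V := by gcongr; exact card_shadow_le_of_sized huni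

lemma EdgeMinimal.exists_pair_forall_mem_windows [Fintype V] {k : ℕ} {E : Finset (Finset V)}
    (hmin : EdgeMinimal k E) {e : Finset V} (he : e ∈ E) :
    ∃ p : V × V, p.1 ≠ p.2 ∧ ∀ c : List V, IsChainSeq k c → (∀ x ∈ windows k c, x ∈ E) →
      p.1 ∈ c → p.2 ∈ c → e ∈ windows k c := by
  have h := hmin e he
  simp only [ChainConn, ChainConnOn, not_forall] at h
  obtain ⟨u, -, v, -, huv, hnc⟩ := h
  refine ⟨(u, v), huv, fun c hc hcE hu hv => ?_⟩
  by_contra hec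
  exact hnc ⟨c, hc, fun x hx => mem_erase.2 ⟨fun hxe => hec (hxe ▸ hx), hcE x hx⟩, hu, hv⟩

lemma IsHypertree.card_le_of_edgeMinimal [Fintype V] {k : ℕ} {E : Finset (Finset V)}
    (hk : 0 < k) (hT : IsHypertree k E) (hmin : EdgeMinimal k E) :
    #E ≤ Fintype.card V ^ 3 := by
  obtain ⟨-, hconn, hfree⟩ := hT
  rcases E.eq_empty_or_nonempty with rfl | ⟨e₀, he₀⟩
  · simp
  have : Nonempty (V × V) := ⟨(hmin.exists_pair_forall_mem_windows he₀).choose⟩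
  choose! f hf_ne hf using fun e => hmin.exists_pair_forall_mem_windows (e := e)
  have hfiber : ∀ p ∈ E.image f, #(E.filter (f · = p)) ≤ Fintype.card V := by
    intro p hp
    obtain ⟨e, he, rfl⟩ := mem_image.1 hp
    obtain ⟨c, hc, hcE, h₁, h₂⟩ := hconn _ (mem_univ _) _ (mem_univ _) (hf_ne e he)
    have hc_nodup : c.Nodup := hfree.nodup hc.1 hc.2.2.1 hc.2.2.2 hcE
    calc #(E.filter (f · = f e)) ≤ #(windows k c).toFinset := card_le_card fun x hx => by
          rw [mem_filter] at hx
          exact List.mem_toFinset.2 (hf x hx.1 c hc hcE (hx.2 ▸ h₁) (hx.2 ▸ h₂))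
      _ ≤ (windows k c).length := List.toFinset_card_le _
      _ ≤ c.length := by rw [length_windows]; omega
      _ ≤ Fintype.card V := hc_nodup.length_le_card
  calc #E ≤ Fintype.card V * #(E.image f) := card_le_mul_card_image E _ hfiber
    _ ≤ Fintype.card V * Fintype.card (V × V) := by gcongr; exact card_le_univ _
    _ = Fintype.card V ^ 3 := by rw [Fintype.card_prod]; ring

lemma mul_pow_four_lt_choose {k n : ℕ} (hk : 5 ≤ k) (hn : 32 * k * k ! + 2 * k < n) :
    k * n ^ 4 < n.choose k := by
  have hchoose : (n + 1 - k) ^ k ≤ k ! * n.choose k := by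
    rw [← Nat.descFactorial_eq_factorial_mul_choose]
    exact Nat.pow_sub_le_descFactorial n k
  have : k ! * (32 * (k * n ^ 4)) < k ! * (32 * n.choose k) :=
    calc k ! * (32 * (k * n ^ 4)) = 32 * k * k ! * n ^ 4 := by ring
      _ < n * n ^ 4 := Nat.mul_lt_mul_of_pos_right (by omega) (pow_pos (by omega) 4)
      _ ≤ (2 * (n + 1 - k)) ^ 5 := by rw [← pow_succ']; gcongr; omega
      _ = 32 * (n + 1 - k) ^ 5 := by ring
      _ ≤ 32 * (n + 1 - k) ^ k := by gcongr; omega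
      _ ≤ k ! * (32 * n.choose k) := by linarith
  have := Nat.lt_of_mul_lt_mul_left this
  omega

/-- for `k > 4` there are only finitely many `k`-uniform isolated
(simultaneously edge-minimal and edge-maximal) hypertrees. -/
theorem stmt19 (k : ℕ) (hk : 4 < k) :
    ∃ N : ℕ, ∀ n : ℕ, N < n →
      ¬ ∃ E : Finset (Finset (Fin n)),
        IsHypertree k E ∧ EdgeMinimal k E ∧ EdgeMaximal k E := by
  refine ⟨32 * k * k ! + 2 * k, fun n hn ⟨E, hT, hmin, hmax⟩ => ?_⟩
  have hupper := hT.card_le_of_edgeMinimal (by omega) hmin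
  have hlower := choose_le_card_mul_of_edgeMaximal (by omega) hT.1 hT.2.2 hmax
  rw [Fintype.card_fin] at hupper hlower
  have hlt := mul_pow_four_lt_choose hk hn
  have : #E * k * n ≤ k * n ^ 4 :=
    calc #E * k * n ≤ n ^ 3 * k * n := by gcongr
      _ = k * n ^ 4 := by ring
  omega
end
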